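/- In the pessimistic 3-SAT reduction PG (Lemma 2, first part): fix a clause-assignment action φ_{ca} with literals l_1, l_2, l_3 and a leader strategy s_n over {a_{v_1},...,a_{v_r}, a_w}. If s_n(a_{v(l_p)}) ≥ 1/(r+1) whenever l_p is positive and s_n(a_{v(l_p)}) ≤ 1/(r+1) whenever l_p is negative (for p = 1,2,3), then the profile (φ_{ca}, φ_{ca}, φ_{ca}) is a Nash equilibrium of the 3-follower game induced by s_n. -/
import Mathlib


variable {r : ℕ} {ClauseAct : Type}

/-- Expected utility of follower `p` playing the clause-assignment action `b`
against the leader strategy `sn` over `{a_{v_1},...,a_{v_r}, a_w}` (`none` is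
`a_w`): if the `p`-th literal of `b` is positive with variable `v` the payoff is
`1` on `a_v` and `0` elsewhere; if negative, `0` on `a_v` and `1` elsewhere. -/
noncomputable def uLn (lit : ClauseAct → Fin 3 → Fin r × Bool)
    (sn : Option (Fin r) → ℝ) (p : Fin 3) (b : ClauseAct) : ℝ :=
  if (lit b p).2 = true then sn (some (lit b p).1) else 1 - sn (some (lit b p).1)

/-- Payoff of follower `p` against follower `q` in the pessimistic 3-SAT
reduction (`none` is the action `f`). -/
noncomputable def pairPayPes (r : ℕ) {ClauseAct : Type} [DecidableEq ClauseAct]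
    (lit : ClauseAct → Fin 3 → Fin r × Bool) (p q : Fin 3) :
    Option ClauseAct → Option ClauseAct → ℝ
  | some b, some b' => if b = b' then 0 else -1
  | none, none => if p < q then 0 else 1
  | none, some b' =>
      if p < q then
        (if (lit b' p).2 = true then 1 / (2 * ((r : ℝ) + 1))
         else (r : ℝ) / (2 * ((r : ℝ) + 1)))
      else 0
  | some b, none =>
      if p < q then 1
      else
        (if (lit b p).2 = true then 1 / (2 * ((r : ℝ) + 1))
         else (r : ℝ) / (2 * ((r : ℝ) + 1)))

/-- Total utility of follower `p` in profile `σ`, given leader strategy `sn`. -/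
noncomputable def totUPes (r : ℕ) {ClauseAct : Type} [DecidableEq ClauseAct]
    (lit : ClauseAct → Fin 3 → Fin r × Bool) (sn : Option (Fin r) → ℝ)
    (σ : Fin 3 → Option ClauseAct) (p : Fin 3) : ℝ :=
  (match σ p with
    | none => 0
    | some b => uLn lit sn p b) +
  ∑ q ∈ Finset.univ.erase p, pairPayPes r lit p q (σ p) (σ q)

/-- Lemma 2, first part: if the leader strategy puts probability at least
`1/(r+1)` on the variable of every positive literal of `φ_{ca}` and at most
`1/(r+1)` on the variable of every negative literal, then `(φ_{ca},φ_{ca},φ_{ca})`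
is a Nash equilibrium of the followers' game. -/
theorem stmt_13 (r : ℕ) (ClauseAct : Type) [DecidableEq ClauseAct]
    (lit : ClauseAct → Fin 3 → Fin r × Bool) (b : ClauseAct)
    (sn : Option (Fin r) → ℝ) (hsn : sn ∈ stdSimplex ℝ (Option (Fin r)))
    (hpos : ∀ p : Fin 3, (lit b p).2 = true →
      sn (some (lit b p).1) ≥ 1 / ((r : ℝ) + 1))
    (hneg : ∀ p : Fin 3, (lit b p).2 = false →
      sn (some (lit b p).1) ≤ 1 / ((r : ℝ) + 1)) :
    ∀ (p : Fin 3) (a' : Option ClauseAct),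
      totUPes r lit sn (Function.update (fun _ => some b) p a') p ≤
        totUPes r lit sn (fun _ => some b) p := by
  obtain ⟨hnn, hsum⟩ := hsn
  have hle1 : ∀ x, sn x ≤ 1 := by
    intro x
    calc sn x ≤ ∑ y, sn y :=
          Finset.single_le_sum (fun y _ => hnn y) (Finset.mem_univ x)
      _ = 1 := hsum
  have hrpos : (0:ℝ) < (r:ℝ) + 1 := by positivity
  have hu0 : ∀ p c, 0 ≤ uLn lit sn p c := by
    intro p c; unfold uLn; split
    · exact hnn _
    · linarith [hle1 (some (lit c p).1)]
  have hu1 : ∀ p c, uLn lit sn p c ≤ 1 := by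
    intro p c; unfold uLn; split
    · exact hle1 _
    · linarith [hnn (some (lit c p).1)]
  intro p a'
  have hcard : (Finset.univ.erase p).card = 2 := by
    rw [Finset.card_erase_of_mem (Finset.mem_univ p)]; simp
  have hRHS : totUPes r lit sn (fun _ => some b) p = uLn lit sn p b := by
    unfold totUPes
    simp [pairPayPes]
  match a' with
  | some b' =>
    by_cases hbb : b' = b
    · subst hbb
      have h : Function.update (fun _ : Fin 3 => some b') p (some b') =
          fun _ : Fin 3 => some b' := by
        funext q; simp [Function.update]
      rw [h]
    · have hLHS : totUPes r lit sn (Function.update (fun _ => some b) p (some b')) p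
          = uLn lit sn p b' + (-1) * 2 := by
        unfold totUPes
        rw [Function.update_self]
        have h : ∀ q ∈ Finset.univ.erase p,
            pairPayPes r lit p q (some b')
              (Function.update (fun _ => some b) p (some b') q) = -1 := by
          intro q hq
          rw [Function.update_of_ne (Finset.ne_of_mem_erase hq)]
          simp [pairPayPes, hbb]
        rw [Finset.sum_congr rfl h, Finset.sum_const, hcard]
        norm_num
      rw [hLHS, hRHS]
      have h1 := hu0 p b; have h2 := hu1 p b'
      linarith
  | none =>
    set v : ℝ := if (lit b p).2 = true then 1 / (2 * ((r : ℝ) + 1))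
        else (r : ℝ) / (2 * ((r : ℝ) + 1)) with hv
    have hv0 : 0 ≤ v := by
      rw [hv]; split <;> positivity
    have hterm : ∀ q ∈ Finset.univ.erase p,
        pairPayPes r lit p q none
          (Function.update (fun _ => some b) p none q) ≤ v := by
      intro q hq
      rw [Function.update_of_ne (Finset.ne_of_mem_erase hq)]
      show pairPayPes r lit p q none (some b) ≤ v
      simp only [pairPayPes]
      split
      · rw [hv]
      · exact hv0
    have hLHS : totUPes r lit sn (Function.update (fun _ => some b) p none) p ≤ 2 * v := by
      unfold totUPes
      rw [Function.update_self]
      calc (0:ℝ) + ∑ q ∈ Finset.univ.erase p,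
            pairPayPes r lit p q none (Function.update (fun _ => some b) p none q)
          ≤ ∑ q ∈ Finset.univ.erase p, v := by
            rw [zero_add]; exact Finset.sum_le_sum hterm
        _ = 2 * v := by rw [Finset.sum_const, hcard]; ring
    rw [hRHS]
    refine hLHS.trans ?_
    unfold uLn
    rw [hv]
    rcases Bool.eq_false_or_eq_true (lit b p).2 with hbt | hbt
    swap
    · have := hneg p hbt
      rw [hbt]; simp only [Bool.false_eq_true, if_false]
      have h2 : (2:ℝ) * ((r:ℝ) / (2 * ((r:ℝ) + 1))) = 1 - 1 / ((r:ℝ) + 1) := by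
        field_simp; ring
      rw [h2]
      linarith
    · have := hpos p hbt
      rw [hbt]; simp only [if_true]
      have h2 : (2:ℝ) * (1 / (2 * ((r:ℝ) + 1))) = 1 / ((r:ℝ) + 1) := by
        field_simp
      rw [h2]; exact this
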